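/- In the splitter game, if connector picks v in graph G_i and splitter picks w to be the L-minimum vertex of N_r^{G_i}(v), then w is weakly 2r-reachable (with respect to L restricted appropriately) in G from every vertex u ∈ N_r^{G_i}(v), where G_i is an induced subgraph of G and L is a linear order of V(G). -/

import Mathlib

/-!
Any two vertices of the `r`-ball are joined, through its centre, by a walk of length at most
`2 * r` that stays in the ball. The `L`-minimum `w` of the ball is minimal on such a walk, and
shortcutting the walk to a path keeps its length bound and the minimality of `w`.
-/

/-- The set of vertices weakly r-reachable from v with respect to L. -/
def WReach {V : Type*} (G : SimpleGraph V) (L : LinearOrder V) (r : ℕ) (v : V) : Set V :=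
  {u | ∃ p : G.Walk v u, p.IsPath ∧ p.length ≤ r ∧ ∀ w ∈ p.support, L.le u w}

/-- The r-ball around v in the induced subgraph of G on the vertex set s. -/
def ballIn {V : Type*} (G : SimpleGraph V) (s : Set V) (r : ℕ) (v : V) : Set V :=
  {u | u ∈ s ∧ ∃ p : G.Walk v u, (∀ w ∈ p.support, w ∈ s) ∧ p.length ≤ r}

open SimpleGraph

section

variable {V : Type*} {G : SimpleGraph V}

lemma mem_ballIn_of_mem_support {s : Set V} {r : ℕ} {v u : V} (p : G.Walk v u)
    (hs : ∀ x ∈ p.support, x ∈ s) (hl : p.length ≤ r) :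
    ∀ x ∈ p.support, x ∈ ballIn G s r v := by
  classical
  intro x hx
  exact ⟨hs x hx, p.takeUntil x hx, fun y hy => hs y (p.support_takeUntil_subset_support hx hy),
    (p.length_takeUntil_le_length hx).trans hl⟩

lemma exists_walk_of_mem_ballIn {s : Set V} {r : ℕ} {v u w : V}
    (hu : u ∈ ballIn G s r v) (hw : w ∈ ballIn G s r v) :
    ∃ q : G.Walk u w, q.length ≤ 2 * r ∧ ∀ x ∈ q.support, x ∈ ballIn G s r v := by
  obtain ⟨-, pu, hpus, hpul⟩ := hu
  obtain ⟨-, pw, hpws, hpwl⟩ := hw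
  refine ⟨pu.reverse.append pw, by simp only [Walk.length_append, Walk.length_reverse]; omega,
    fun x hx => ?_⟩
  rcases (Walk.mem_support_append_iff _ _).mp hx with hx | hx
  · exact mem_ballIn_of_mem_support pu hpus hpul x (by simpa using hx)
  · exact mem_ballIn_of_mem_support pw hpws hpwl x hx

lemma mem_wReach_of_walk (L : LinearOrder V) {n : ℕ} {u w : V} (q : G.Walk u w)
    (hl : q.length ≤ n) (hmin : ∀ x ∈ q.support, L.le w x) : w ∈ WReach G L n u := by
  classical
  exact ⟨q.bypass, q.bypass_isPath, q.length_bypass_le_length.trans hl,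
    fun x hx => hmin x (q.support_bypass_subset_support hx)⟩

end

/-- If splitter picks w to be the L-minimum vertex of the r-ball around connector's
choice v inside the current induced subgraph on s, then w is weakly 2r-reachable in G
from every vertex u of that ball. -/
theorem stmt8 {V : Type*} (G : SimpleGraph V) (L : LinearOrder V) (r : ℕ)
    (s : Set V) (v w : V)
    (hw : w ∈ ballIn G s r v) (hmin : ∀ u ∈ ballIn G s r v, L.le w u) :
    ∀ u ∈ ballIn G s r v, w ∈ WReach G L (2 * r) u := by
  intro u hu
  obtain ⟨q, hql, hqs⟩ := exists_walk_of_mem_ballIn hu hw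
  exact mem_wReach_of_walk L q hql fun x hx => hmin x (hqs x hx)
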